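/- arXiv:2103.15612 — 4 statements merged into one kernel-verified Lean document; each statement's English description precedes it below -/
import Mathlib

section
/- Let p > 2 be a real number and let a > 0, b ≥ 0, d ≥ 0 be constants. Let F₁ : ℝ → ℝ be convex and differentiable, let F₂ : ℝ → ℝ satisfy |F₂(s)| ≤ d(1 + s²) for all s ∈ ℝ, and suppose that F := F₁ + F₂ satisfies F(s) ≥ a|s|^p − b for all s ∈ ℝ. Then there exists a constant C ≥ 0 such that F₁′(s)·s ≥ (a/2)|s|^p − C for all s ∈ ℝ. -/
/-!
Convexity puts `F₁` above its tangent at `s`, so `F₁' (s) s ≥ F₁ s - F₁ 0`, and the growth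
assumption bounds `F₁ s` below by `a |s|^p - b - d (1 + s²)`. Since `p > 2`, the quadratic term
`d s²` is at most `(a / 2) |s|^p` up to a constant, which leaves half of the coercivity.
-/

open Filter Set

lemma ConvexOn.add_deriv_mul_sub_le {S : Set ℝ} {f : ℝ → ℝ} {x y : ℝ} (hf : ConvexOn ℝ S f)
    (hx : x ∈ S) (hy : y ∈ S) (hfx : DifferentiableAt ℝ f x) :
    f x + deriv f x * (y - x) ≤ f y := by
  rcases lt_trichotomy x y with hxy | rfl | hyx
  · have h := hf.deriv_le_slope hx hy hxy hfx
    rw [slope_def_field, le_div_iff₀ (sub_pos.2 hxy)] at h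
    linarith
  · simp
  · have h := hf.slope_le_deriv hy hx hyx hfx
    rw [slope_def_field, div_le_iff₀ (sub_pos.2 hyx)] at h
    linarith

lemma exists_mul_rpow_le_mul_rpow_add {p q ε : ℝ} (c : ℝ) (hq : 0 ≤ q) (hqp : q < p)
    (hε : 0 < ε) : ∃ K, ∀ x, 0 ≤ x → c * x ^ q ≤ ε * x ^ p + K := by
  obtain ⟨T, hT⟩ := eventually_atTop.1
    ((tendsto_rpow_atTop (sub_pos.2 hqp)).eventually_ge_atTop (c / ε))
  refine ⟨|c| * |T| ^ q, fun x hx => ?_⟩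
  have hxq : 0 ≤ x ^ q := Real.rpow_nonneg hx q
  rcases le_total x T with hxT | hTx
  · calc c * x ^ q ≤ |c| * |T| ^ q :=
          mul_le_mul (le_abs_self c) (Real.rpow_le_rpow hx (hxT.trans (le_abs_self T)) hq)
            hxq (abs_nonneg c)
      _ ≤ ε * x ^ p + |c| * |T| ^ q :=
          le_add_of_nonneg_left (mul_nonneg hε.le (Real.rpow_nonneg hx p))
  · have hsplit : x ^ p = x ^ (p - q) * x ^ q := by
      rw [← Real.rpow_add' hx (by linarith), sub_add_cancel]
    calc c * x ^ q = ε * (c / ε) * x ^ q := by field_simp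
      _ ≤ ε * x ^ (p - q) * x ^ q := by gcongr; exact hT x hTx
      _ = ε * x ^ p := by rw [hsplit, mul_assoc]
      _ ≤ ε * x ^ p + |c| * |T| ^ q := le_add_of_nonneg_right (by positivity)

theorem stmt_0_general (p a b d : ℝ) (hp : 2 < p) (ha : 0 < a)
    (F₁ F₂ : ℝ → ℝ) (hconv : ConvexOn ℝ Set.univ F₁) (hdiff : Differentiable ℝ F₁)
    (hF₂ : ∀ s : ℝ, |F₂ s| ≤ d * (1 + s ^ 2))
    (hF : ∀ s : ℝ, a * |s| ^ p - b ≤ F₁ s + F₂ s) :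
    ∃ C : ℝ, 0 ≤ C ∧ ∀ s : ℝ, (a / 2) * |s| ^ p - C ≤ deriv F₁ s * s := by
  obtain ⟨K, hK⟩ := exists_mul_rpow_le_mul_rpow_add d zero_le_two hp (half_pos ha)
  refine ⟨max (b + d + K + F₁ 0) 0, le_max_right _ _, fun s => ?_⟩
  have htangent := hconv.add_deriv_mul_sub_le (mem_univ s) (mem_univ 0) (hdiff s)
  have hquad : d * s ^ 2 ≤ a / 2 * |s| ^ p + K := by
    simpa only [Real.rpow_two, sq_abs] using hK |s| (abs_nonneg s)
  have hF₂_le := (abs_le.1 (hF₂ s)).2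
  have hgrowth := hF s
  have hC := le_max_left (b + d + K + F₁ 0) 0
  linarith

/-- Coercivity estimate for the convex part of the potential
(estimate (EST:F1P) of the paper). -/
theorem stmt_0 (p a b d : ℝ) (hp : 2 < p) (ha : 0 < a) (hb : 0 ≤ b) (hd : 0 ≤ d)
    (F₁ F₂ : ℝ → ℝ) (hconv : ConvexOn ℝ Set.univ F₁) (hdiff : Differentiable ℝ F₁)
    (hF₂ : ∀ s : ℝ, |F₂ s| ≤ d * (1 + s ^ 2))
    (hF : ∀ s : ℝ, a * |s| ^ p - b ≤ F₁ s + F₂ s) :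
    ∃ C : ℝ, 0 ≤ C ∧ ∀ s : ℝ, (a / 2) * |s| ^ p - C ≤ deriv F₁ s * s :=
  stmt_0_general p a b d hp ha F₁ F₂ hconv hdiff hF₂ hF
end

section
/- Let C > 0 and K ≥ 0. Suppose y : [0,∞) → [0,∞) is continuous, differentiable on (0,∞), satisfies y′(τ) ≤ C·y(τ) for all τ > 0, and satisfies ∫₀^∞ y(τ) dτ ≤ K. Then for every t > 0 it holds that y(t) ≤ K·(C·t + 1)/t. -/
/-!
By Grönwall, `τ ↦ y τ * exp (-C τ)` is nonincreasing on `(0, ∞)`, so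
`y s ≥ y t * exp (-C (t - s))` for `0 < s < t`. Integrating over `(0, t)` gives `K ≥ y t * (1 - exp (-C t)) / C`, and
`1 - exp (-x) ≥ x / (x + 1)` turns this into `y t ≤ K (C t + 1) / t`.
-/

open MeasureTheory Real Set

theorem le_mul_exp_of_deriv_le_mul {y : ℝ → ℝ} {C a b : ℝ} (hab : a ≤ b)
    (hdiff : ∀ x ∈ Icc a b, DifferentiableAt ℝ y x)
    (hderiv : ∀ x ∈ Ico a b, deriv y x ≤ C * y x) :
    y b ≤ y a * exp (C * (b - a)) := by
  have := le_gronwallBound_of_liminf_deriv_right_le (f' := deriv y) (ε := 0)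
    (fun x hx => (hdiff x hx).continuousAt.continuousWithinAt)
    (fun x hx _ hr =>
      (hdiff x (Ico_subset_Icc_self hx)).hasDerivAt.hasDerivWithinAt.liminf_right_slope_le hr)
    le_rfl (by simpa using hderiv) b ⟨hab, le_rfl⟩
  rwa [gronwallBound_ε0] at this

theorem integral_exp_mul {a b c : ℝ} (hc : c ≠ 0) :
    ∫ x in a..b, exp (c * x) = (exp (c * b) - exp (c * a)) / c := by
  rw [intervalIntegral.integral_comp_mul_left (fun x => exp x) hc, integral_exp, smul_eq_mul,
    inv_mul_eq_div]

theorem div_add_one_le_one_sub_exp_neg {x : ℝ} (hx : 0 ≤ x) : x / (x + 1) ≤ 1 - exp (-x) := by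
  have hexp : exp (-x) * (x + 1) ≤ 1 := by
    calc exp (-x) * (x + 1) ≤ exp (-x) * exp x := by gcongr; exact add_one_le_exp x
      _ = 1 := by rw [← exp_add, neg_add_cancel, exp_zero]
  rw [div_le_iff₀ (by positivity)]
  linarith

theorem ofReal_intervalIntegral_le_setLIntegral_Ioo {f g : ℝ → ℝ} {a b : ℝ} (hab : a ≤ b)
    (hg : IntervalIntegrable g volume a b) (hg_nonneg : ∀ x ∈ Ioo a b, 0 ≤ g x)
    (hgf : ∀ x ∈ Ioo a b, g x ≤ f x) :
    ENNReal.ofReal (∫ x in a..b, g x) ≤ ∫⁻ x in Ioo a b, ENNReal.ofReal (f x) := by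
  rw [intervalIntegral.integral_of_le hab, integral_Ioc_eq_integral_Ioo,
    ofReal_integral_eq_lintegral_ofReal
      (hg.1.mono_set Ioo_subset_Ioc_self)
      ((ae_restrict_iff' measurableSet_Ioo).2 (Filter.Eventually.of_forall hg_nonneg))]
  exact setLIntegral_mono' measurableSet_Ioo fun x hx => ENNReal.ofReal_le_ofReal (hgf x hx)

theorem stmt_1_general (C K : ℝ) (hC : 0 < C) (hK : 0 ≤ K) (y : ℝ → ℝ)
    (hy_diff : ∀ τ : ℝ, 0 < τ → DifferentiableAt ℝ y τ)
    (hy_deriv : ∀ τ : ℝ, 0 < τ → deriv y τ ≤ C * y τ)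
    (hy_int : ∫⁻ τ in Set.Ioi (0:ℝ), ENNReal.ofReal (y τ) ≤ ENNReal.ofReal K) :
    ∀ t : ℝ, 0 < t → y t ≤ K * (C * t + 1) / t := by
  intro t ht
  rcases le_or_gt (y t) 0 with hyt | hyt
  · exact hyt.trans (by positivity)
  have hlower : ∀ s ∈ Ioo 0 t, y t * exp (-(C * t)) * exp (C * s) ≤ y s := fun s hs => by
    have := le_mul_exp_of_deriv_le_mul hs.2.le (fun x hx => hy_diff x (hs.1.trans_le hx.1))
      (fun x hx => hy_deriv x (hs.1.trans_le hx.1))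
    calc y t * exp (-(C * t)) * exp (C * s) = y t * exp (-(C * (t - s))) := by
          rw [mul_assoc, ← exp_add]; ring_nf
      _ ≤ y s * exp (C * (t - s)) * exp (-(C * (t - s))) := by gcongr
      _ = y s := by rw [mul_assoc, ← exp_add, add_neg_cancel, exp_zero, mul_one]
  have hintegral : ∫ s in 0..t, y t * exp (-(C * t)) * exp (C * s) ≤ K := by
    refine (ENNReal.ofReal_le_ofReal_iff hK).1 ?_
    calc _ ≤ ∫⁻ s in Ioo 0 t, ENNReal.ofReal (y s) :=
          ofReal_intervalIntegral_le_setLIntegral_Ioo ht.le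
            ((by fun_prop : Continuous _).intervalIntegrable _ _) (fun s _ => by positivity) hlower
      _ ≤ _ := (lintegral_mono_set Ioo_subset_Ioi_self).trans hy_int
  rw [intervalIntegral.integral_const_mul, integral_exp_mul hC.ne'] at hintegral
  have hfactor :
      exp (-(C * t)) * ((exp (C * t) - exp (C * 0)) / C) = (1 - exp (-(C * t))) / C := by
    rw [mul_zero, exp_zero, mul_div_assoc', mul_sub, ← exp_add, neg_add_cancel, exp_zero, mul_one]
  rw [mul_assoc, hfactor] at hintegral
  rw [le_div_iff₀ ht]
  calc y t * t = y t * (C * t / (C * t + 1)) / C * (C * t + 1) := by field_simp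
    _ ≤ y t * (1 - exp (-(C * t))) / C * (C * t + 1) := by
        gcongr; exact div_add_one_le_one_sub_exp_neg (mul_pos hC ht).le
    _ ≤ K * (C * t + 1) := by gcongr; rwa [mul_div_assoc]

/-- the time-weighted Gronwall-type argument behind the parabolic
smoothing property (estimates (est1)–(est:u*) in the proof of Theorem 3.1(v)). -/
theorem stmt_1 (C K : ℝ) (hC : 0 < C) (hK : 0 ≤ K) (y : ℝ → ℝ)
    (hy_nonneg : ∀ t : ℝ, 0 ≤ t → 0 ≤ y t)
    (hy_cont : ContinuousOn y (Set.Ici 0))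
    (hy_diff : ∀ τ : ℝ, 0 < τ → DifferentiableAt ℝ y τ)
    (hy_deriv : ∀ τ : ℝ, 0 < τ → deriv y τ ≤ C * y τ)
    (hy_int : ∫⁻ τ in Set.Ioi (0:ℝ), ENNReal.ofReal (y τ) ≤ ENNReal.ofReal K) :
    ∀ t : ℝ, 0 < t → y t ≤ K * (C * t + 1) / t :=
  stmt_1_general C K hC hK y hy_diff hy_deriv hy_int
end

section
/- Let (X,d) be a metric space and let ρ be a pseudometric on X. Let {S(t)}_{t≥0} be a semigroup on X, let T₀ > 0, and let K ⊆ X be nonempty with S(t)(K) ⊆ K for all t ≥ T₀. Let M_D ⊆ K be nonempty and set M := ⋃_{s∈[T₀,2T₀]} S(s)(M_D). Assume: (i) there exist c, a > 0 such that inf_{y∈M_D} ρ(S(nT₀)x, y) ≤ c·e^{−a·n} for all n ∈ ℕ₀ and all x ∈ K; (ii) there exists Λ > 0 such that d(S(s)x, S(s)y) ≤ Λ·ρ(x,y) for all s ∈ [T₀, 2T₀] and all x, y ∈ K; (iii) the set (⋃_{t∈[0,2T₀]} S(t)(K)) ∪ M is bounded in (X,d). Then there exist constants C > 0 and α > 0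 such that sup_{x∈K} inf_{z∈M} d(S(t)x, z) ≤ C·e^{−α·t} for all t ≥ 0. -/
/-- A semigroup `{S(t)}_{t ≥ 0}` on `X`: `S 0 = id` and `S (t+s) = S t ∘ S s`
for all `s, t ≥ 0`. -/
def IsSemigroup {X : Type*} (S : ℝ → X → X) : Prop :=
  S 0 = id ∧ ∀ t s : ℝ, 0 ≤ t → 0 ≤ s → S (t + s) = S t ∘ S s

/-- A pseudometric on `X`: nonnegative, vanishing on the diagonal, symmetric,
and satisfying the triangle inequality. -/
def IsPseudometric {X : Type*} (ρ : X → X → ℝ) : Prop :=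
  (∀ x y : X, 0 ≤ ρ x y) ∧ (∀ x : X, ρ x x = 0) ∧ (∀ x y : X, ρ x y = ρ y x) ∧
    (∀ x y z : X, ρ x z ≤ ρ x y + ρ y z)

/-!
For `t ≥ 2 T₀` write `t = s + n T₀` with `n ≥ 1` and `s ∈ [T₀, 2 T₀]`. Then `S(n T₀) x ∈ K` lies
`ρ`-close to `M_D` by (i), and the Lipschitz smoothing (ii) of `S(s)` turns this into `d`-closeness
of `S(t) x` to `S(s) M_D ⊆ M`, at rate `e^{-a n} ≤ e^{2a} e^{-(a/T₀) t}`. For `t < 2 T₀` the distance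
is bounded by the diameter of the bounded set (iii).
-/

open Metric Real Set

lemma exists_pos_nat_mul_add_mem_Icc {T t : ℝ} (hT : 0 < T) (ht : 2 * T ≤ t) :
    ∃ n : ℕ, 0 < n ∧ ∃ s ∈ Icc T (2 * T), t = s + n * T := by
  have h2 : 2 ≤ ⌊t / T⌋₊ := Nat.le_floor (by rw [le_div_iff₀ hT]; push_cast; linarith)
  have hlo : (⌊t / T⌋₊ : ℝ) * T ≤ t :=
    (le_div_iff₀ hT).1 (Nat.floor_le (div_nonneg (by linarith) hT.le))
  have hhi : t < (⌊t / T⌋₊ + 1) * T := (div_lt_iff₀ hT).1 (Nat.lt_floor_add_one _)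
  refine ⟨⌊t / T⌋₊ - 1, by omega, t - (⌊t / T⌋₊ - 1 : ℕ) * T, ⟨?_, ?_⟩, by ring⟩ <;>
    push_cast [Nat.cast_sub (by omega : 1 ≤ ⌊t / T⌋₊)] <;> linarith

lemma exp_neg_mul_le_exp_mul_exp {a T t n : ℝ} (ha : 0 ≤ a) (hT : 0 < T)
    (ht : t ≤ (n + 2) * T) : exp (-a * n) ≤ exp (2 * a) * exp (-(a / T) * t) := by
  rw [← exp_add, exp_le_exp]
  have : a / T * t ≤ a * (n + 2) := by
    rw [div_mul_eq_mul_div, div_le_iff₀ hT, mul_assoc]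
    exact mul_le_mul_of_nonneg_left ht ha
  linarith

lemma infDist_le_mul_iInf_of_dist_le {X Y : Type*} [PseudoMetricSpace Y] {ρ : X → X → ℝ}
    {f : X → Y} {A : Set X} [Nonempty A] {M : Set Y} {L : ℝ} {x : X} (hL : 0 ≤ L)
    (hf : ∀ y ∈ A, dist (f x) (f y) ≤ L * ρ x y) (hfA : f '' A ⊆ M) :
    infDist (f x) M ≤ L * ⨅ y : A, ρ x y := by
  rw [Real.mul_iInf_of_nonneg hL]
  exact le_ciInf fun y => (infDist_le_dist_of_mem (hfA ⟨y, y.2, rfl⟩)).trans (hf y y.2)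

theorem stmt_11_general {X : Type*} [MetricSpace X] (ρ : X → X → ℝ)
    (S : ℝ → X → X) (hS : IsSemigroup S)
    (T₀ : ℝ) (hT₀ : 0 < T₀)
    (K : Set X) (hKinv : ∀ t : ℝ, T₀ ≤ t → S t '' K ⊆ K)
    (MD : Set X) (hMD : MD.Nonempty) (hMDK : MD ⊆ K)
    (M : Set X) (hM : M = ⋃ s ∈ Set.Icc T₀ (2 * T₀), S s '' MD)
    (c a : ℝ) (hc : 0 < c) (ha : 0 < a)
    (hattr : ∀ n : ℕ, ∀ x ∈ K,
      (⨅ y : MD, ρ (S ((n : ℝ) * T₀) x) y) ≤ c * Real.exp (-a * n))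
    (Lam : ℝ) (hLam : 0 < Lam)
    (hLip : ∀ s ∈ Set.Icc T₀ (2 * T₀), ∀ x ∈ K, ∀ y ∈ K,
      dist (S s x) (S s y) ≤ Lam * ρ x y)
    (hbdd : Bornology.IsBounded ((⋃ t ∈ Set.Icc (0:ℝ) (2 * T₀), S t '' K) ∪ M)) :
    ∃ C α : ℝ, 0 < C ∧ 0 < α ∧ ∀ t : ℝ, 0 ≤ t → ∀ x ∈ K,
      Metric.infDist (S t x) M ≤ C * Real.exp (-α * t) := by
  obtain ⟨y₀, hy₀⟩ := hMD
  have : Nonempty MD := ⟨⟨y₀, hy₀⟩⟩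
  have hy₀M : S T₀ y₀ ∈ M := hM ▸ mem_biUnion ⟨le_rfl, by linarith⟩ ⟨y₀, hy₀, rfl⟩
  set C₀ := max (Lam * c) (diam ((⋃ t ∈ Icc (0:ℝ) (2 * T₀), S t '' K) ∪ M))
  have hC₀ : 0 < C₀ := lt_max_of_lt_left (mul_pos hLam hc)
  refine ⟨C₀ * exp (2 * a), a / T₀, by positivity, div_pos ha hT₀, fun t ht x hx => ?_⟩
  rcases lt_or_ge t (2 * T₀) with hsmall | hlarge
  · have hexp := exp_neg_mul_le_exp_mul_exp (t := t) (n := 0) ha.le hT₀ (by linarith)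
    rw [mul_zero, exp_zero] at hexp
    calc infDist (S t x) M ≤ dist (S t x) (S T₀ y₀) := infDist_le_dist_of_mem hy₀M
      _ ≤ diam ((⋃ t ∈ Icc (0:ℝ) (2 * T₀), S t '' K) ∪ M) :=
          dist_le_diam_of_mem hbdd (Or.inl (mem_biUnion ⟨ht, hsmall.le⟩ ⟨x, hx, rfl⟩))
            (Or.inr hy₀M)
      _ ≤ C₀ * (exp (2 * a) * exp (-(a / T₀) * t)) :=
          (le_max_right _ _).trans (le_mul_of_one_le_right hC₀.le hexp)
      _ = _ := by ring
  · obtain ⟨n, hn, s, hs, rfl⟩ := exists_pos_nat_mul_add_mem_Icc hT₀ hlarge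
    have hnT₀ : T₀ ≤ n * T₀ := le_mul_of_one_le_left hT₀.le (by exact_mod_cast hn)
    have hz : S (n * T₀) x ∈ K := hKinv _ hnT₀ ⟨x, hx, rfl⟩
    have hSs : S s '' MD ⊆ M := hM ▸ subset_biUnion_of_mem (u := fun s => S s '' MD) hs
    calc infDist (S (s + n * T₀) x) M = infDist (S s (S (n * T₀) x)) M := by
          rw [hS.2 s _ (by linarith [hs.1]) (by linarith)]; rfl
      _ ≤ Lam * ⨅ y : MD, ρ (S (n * T₀) x) y :=
          infDist_le_mul_iInf_of_dist_le hLam.le (fun y hy => hLip s hs _ hz y (hMDK hy)) hSs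
      _ ≤ Lam * c * exp (-a * n) := by rw [mul_assoc]; gcongr; exact hattr n x hx
      _ ≤ C₀ * (exp (2 * a) * exp (-(a / T₀) * (s + n * T₀))) :=
          mul_le_mul (le_max_left _ _)
            (exp_neg_mul_le_exp_mul_exp ha.le hT₀ (by linarith [hs.2])) (by positivity) hC₀.le
      _ = _ := by ring

/-- upgrading discrete-time exponential attraction in a weaker
pseudometric `ρ` to continuous-time exponential attraction in the metric of
`X`, via a uniform Lipschitz smoothing estimate (part (c) of the final theorem
of Section 6 of the paper). -/
theorem stmt_11 {X : Type*} [MetricSpace X] (ρ : X → X → ℝ)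
    (hρ : IsPseudometric ρ)
    (S : ℝ → X → X) (hS : IsSemigroup S)
    (T₀ : ℝ) (hT₀ : 0 < T₀)
    (K : Set X) (hK : K.Nonempty) (hKinv : ∀ t : ℝ, T₀ ≤ t → S t '' K ⊆ K)
    (MD : Set X) (hMD : MD.Nonempty) (hMDK : MD ⊆ K)
    (M : Set X) (hM : M = ⋃ s ∈ Set.Icc T₀ (2 * T₀), S s '' MD)
    (c a : ℝ) (hc : 0 < c) (ha : 0 < a)
    (hattr : ∀ n : ℕ, ∀ x ∈ K,
      (⨅ y : MD, ρ (S ((n : ℝ) * T₀) x) y) ≤ c * Real.exp (-a * n))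
    (Lam : ℝ) (hLam : 0 < Lam)
    (hLip : ∀ s ∈ Set.Icc T₀ (2 * T₀), ∀ x ∈ K, ∀ y ∈ K,
      dist (S s x) (S s y) ≤ Lam * ρ x y)
    (hbdd : Bornology.IsBounded ((⋃ t ∈ Set.Icc (0:ℝ) (2 * T₀), S t '' K) ∪ M)) :
    ∃ C α : ℝ, 0 < C ∧ 0 < α ∧ ∀ t : ℝ, 0 ≤ t → ∀ x ∈ K,
      Metric.infDist (S t x) M ≤ C * Real.exp (-α * t) :=
  stmt_11_general ρ S hS T₀ hT₀ K hKinv MD hMD hMDK M hM c a hc ha hattr Lam hLam hLip hbdd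
end

section
/- Let (X,d) be a metric space, let ρ be a pseudometric on X, let K ⊆ X, let T₀ > 0 and L* > 0. For each L ∈ [0,L*], let S^L(t) : K → X be given maps for t ∈ [T₀, 2T₀], let M_D^L ⊆ K be nonempty, and set M^L := ⋃_{t∈[T₀,2T₀]} S^L(t)(M_D^L). Assume: (i) there exist c > 0 and δ > 0 such that the symmetric Hausdorff distance with respect to ρ satisfies dist_{sym,ρ}(M_D^L, M_D^0) ≤ c·L^δ for all L ∈ [0,L*]; (ii) there exists Λ > 0 such that d(S^L(t)x, S^L(t)y) ≤ Λ·ρ(x,y) for all L ∈ [0,L*], t ∈ [T₀,2T₀] and x, y ∈ K; (iii) there exist C₀ > 0 and κ > 0 such that d(S^L(t)x, S^0(t)x) ≤ C₀·L^κ for all L ∈ [0,L*], t ∈ [T₀,2T₀] and x ∈ K. Then for all L ∈ [0,L*] one has dist_{sym,d}(M^L, M^0) ≤ (C₀ + Λ·c)·(L^κ + L^δ). -/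
open Metric

section RobustnessTransfer

variable {ι α X : Type*} [PseudoMetricSpace X]

theorem infDist_image_le_mul_iInf (ρ : α → α → ℝ) (f : α → X) {Λ : ℝ} (hΛ : 0 ≤ Λ)
    {B : Set α} (hB : B.Nonempty) {x : α}
    (hf : ∀ y ∈ B, dist (f x) (f y) ≤ Λ * ρ x y) :
    infDist (f x) (f '' B) ≤ Λ * ⨅ y : B, ρ x y := by
  have : Nonempty B := hB.to_subtype
  rw [Real.mul_iInf_of_nonneg hΛ]
  exact le_ciInf fun ⟨y, hy⟩ =>
    (infDist_le_dist_of_mem (Set.mem_image_of_mem f hy)).trans (hf y hy)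

theorem infDist_biUnion_image_le (ρ : α → α → ℝ) (F G : ι → α → X) {I : Set ι}
    {A B : Set α} (hB : B.Nonempty) {Λ ε η : ℝ} (hΛ : 0 ≤ Λ)
    (hclose : ∀ x ∈ A, ⨅ y : B, ρ x y ≤ η)
    (hLip : ∀ t ∈ I, ∀ x ∈ A, ∀ y ∈ B, dist (G t x) (G t y) ≤ Λ * ρ x y)
    (hconv : ∀ t ∈ I, ∀ x ∈ A, dist (F t x) (G t x) ≤ ε) :
    ∀ u ∈ ⋃ t ∈ I, F t '' A, infDist u (⋃ t ∈ I, G t '' B) ≤ ε + Λ * η := by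
  intro u hu
  simp only [Set.mem_iUnion, Set.mem_image] at hu
  obtain ⟨t, ht, x, hx, rfl⟩ := hu
  have hsub : G t '' B ⊆ ⋃ t ∈ I, G t '' B :=
    Set.subset_biUnion_of_mem (u := fun t => G t '' B) ht
  calc infDist (F t x) (⋃ t ∈ I, G t '' B)
      ≤ infDist (F t x) (G t '' B) := infDist_le_infDist_of_subset hsub (hB.image _)
    _ ≤ infDist (G t x) (G t '' B) + dist (F t x) (G t x) := infDist_le_infDist_add_dist
    _ ≤ Λ * η + ε := by
        gcongr
        · exact (infDist_image_le_mul_iInf ρ (G t) hΛ hB (hLip t ht x hx)).trans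
            (mul_le_mul_of_nonneg_left (hclose x hx) hΛ)
        · exact hconv t ht x hx
    _ = ε + Λ * η := add_comm _ _

end RobustnessTransfer

theorem stmt_12_general {X : Type*} [MetricSpace X] (ρ : X → X → ℝ)
    (K : Set X) (T₀ Lstar : ℝ) (hLstar : 0 < Lstar)
    (S : ℝ → ℝ → X → X)
    (MD : ℝ → Set X) (hMDne : ∀ L ∈ Set.Icc (0:ℝ) Lstar, (MD L).Nonempty)
    (hMDK : ∀ L ∈ Set.Icc (0:ℝ) Lstar, MD L ⊆ K)
    (M : ℝ → Set X)
    (hM : ∀ L ∈ Set.Icc (0:ℝ) Lstar,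
      M L = ⋃ t ∈ Set.Icc T₀ (2 * T₀), S L t '' MD L)
    (c δ : ℝ) (hc : 0 < c)
    (hclose₁ : ∀ L ∈ Set.Icc (0:ℝ) Lstar, ∀ x ∈ MD L,
      (⨅ y : MD 0, ρ x y) ≤ c * L ^ δ)
    (hclose₂ : ∀ L ∈ Set.Icc (0:ℝ) Lstar, ∀ y ∈ MD 0,
      (⨅ x : MD L, ρ y x) ≤ c * L ^ δ)
    (Lam : ℝ) (hLam : 0 < Lam)
    (hLip : ∀ L ∈ Set.Icc (0:ℝ) Lstar, ∀ t ∈ Set.Icc T₀ (2 * T₀), ∀ x ∈ K, ∀ y ∈ K,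
      dist (S L t x) (S L t y) ≤ Lam * ρ x y)
    (C₀ κ : ℝ) (hC₀ : 0 < C₀)
    (hconv : ∀ L ∈ Set.Icc (0:ℝ) Lstar, ∀ t ∈ Set.Icc T₀ (2 * T₀), ∀ x ∈ K,
      dist (S L t x) (S 0 t x) ≤ C₀ * L ^ κ) :
    ∀ L ∈ Set.Icc (0:ℝ) Lstar,
      (∀ u ∈ M L, Metric.infDist u (M 0) ≤ (C₀ + Lam * c) * (L ^ κ + L ^ δ)) ∧
      (∀ u ∈ M 0, Metric.infDist u (M L) ≤ (C₀ + Lam * c) * (L ^ κ + L ^ δ)) := by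
  intro L hL
  have h0 : (0:ℝ) ∈ Set.Icc (0:ℝ) Lstar := ⟨le_rfl, hLstar.le⟩
  have hrate : C₀ * L ^ κ + Lam * (c * L ^ δ) ≤ (C₀ + Lam * c) * (L ^ κ + L ^ δ) := by
    have := Real.rpow_nonneg hL.1 κ
    have := Real.rpow_nonneg hL.1 δ
    nlinarith [mul_pos hLam hc]
  rw [hM L hL, hM 0 h0]
  constructor
  · intro u hu
    exact (infDist_biUnion_image_le ρ (S L) (S 0) (hMDne 0 h0) hLam.le (hclose₁ L hL)
      (fun t ht x hx y hy => hLip 0 h0 t ht x (hMDK L hL hx) y (hMDK 0 h0 hy))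
      (fun t ht x hx => hconv L hL t ht x (hMDK L hL hx)) u hu).trans hrate
  · intro u hu
    exact (infDist_biUnion_image_le ρ (S 0) (S L) (hMDne L hL) hLam.le (hclose₂ L hL)
      (fun t ht y hy x hx => hLip L hL t ht y (hMDK 0 h0 hy) x (hMDK L hL hx))
      (fun t ht y hy => (dist_comm _ _).trans_le (hconv L hL t ht y (hMDK 0 h0 hy))) u hu).trans
      hrate

/-- robustness transfer (part (b) of the final theorem of
Section 6 of the paper). Closeness of the discrete attractors `M_D^L` in the
weak pseudometric `ρ`, uniform Lipschitz smoothing of the semigroups from `ρ`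
into the metric `d`, and the convergence rate `d(S^L(t)x, S^0(t)x) ≤ C₀ L^κ`
yield closeness of `M^L := ⋃_{t∈[T₀,2T₀]} S^L(t) M_D^L` and `M^0` in `d`.
The (symmetric) Hausdorff (semi)distance bounds are expressed equivalently in
the pointwise form `sup-inf ≤ c ↔ ∀ point, inf ≤ c`. -/
theorem stmt_12 {X : Type*} [MetricSpace X] (ρ : X → X → ℝ)
    (hρ : IsPseudometric ρ)
    (K : Set X) (T₀ Lstar : ℝ) (hT₀ : 0 < T₀) (hLstar : 0 < Lstar)
    (S : ℝ → ℝ → X → X)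
    (MD : ℝ → Set X) (hMDne : ∀ L ∈ Set.Icc (0:ℝ) Lstar, (MD L).Nonempty)
    (hMDK : ∀ L ∈ Set.Icc (0:ℝ) Lstar, MD L ⊆ K)
    (M : ℝ → Set X)
    (hM : ∀ L ∈ Set.Icc (0:ℝ) Lstar,
      M L = ⋃ t ∈ Set.Icc T₀ (2 * T₀), S L t '' MD L)
    (c δ : ℝ) (hc : 0 < c) (hδ : 0 < δ)
    (hclose₁ : ∀ L ∈ Set.Icc (0:ℝ) Lstar, ∀ x ∈ MD L,
      (⨅ y : MD 0, ρ x y) ≤ c * L ^ δ)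
    (hclose₂ : ∀ L ∈ Set.Icc (0:ℝ) Lstar, ∀ y ∈ MD 0,
      (⨅ x : MD L, ρ y x) ≤ c * L ^ δ)
    (Lam : ℝ) (hLam : 0 < Lam)
    (hLip : ∀ L ∈ Set.Icc (0:ℝ) Lstar, ∀ t ∈ Set.Icc T₀ (2 * T₀), ∀ x ∈ K, ∀ y ∈ K,
      dist (S L t x) (S L t y) ≤ Lam * ρ x y)
    (C₀ κ : ℝ) (hC₀ : 0 < C₀) (hκ : 0 < κ)
    (hconv : ∀ L ∈ Set.Icc (0:ℝ) Lstar, ∀ t ∈ Set.Icc T₀ (2 * T₀), ∀ x ∈ K,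
      dist (S L t x) (S 0 t x) ≤ C₀ * L ^ κ) :
    ∀ L ∈ Set.Icc (0:ℝ) Lstar,
      (∀ u ∈ M L, Metric.infDist u (M 0) ≤ (C₀ + Lam * c) * (L ^ κ + L ^ δ)) ∧
      (∀ u ∈ M 0, Metric.infDist u (M L) ≤ (C₀ + Lam * c) * (L ^ κ + L ^ δ)) :=
  stmt_12_general ρ K T₀ Lstar hLstar S MD hMDne hMDK M hM c δ hc hclose₁ hclose₂ Lam hLam hLip C₀ κ
    hC₀ hconv
end
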